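/- arXiv:1906.00788 — 11 statements merged into one kernel-verified Lean document; each statement's English description precedes it below -/
import Mathlib

section
/- For all integers n and m, w_{n+m} = u_n * w_{m+1} + (u_{n+1} - r*u_n) * w_m + t * u_{n-1} * w_{m-1}. -/
/-!
Both sides of the identity, as functions of `n` for fixed `m`, satisfy the recurrence on all of
`ℤ` (the right side is a linear combination of shifts of `u`), and they agree at `n = 0, 1, 2`;
note `t * u (-1) = 0` by the recurrence at `n = 2`. Since `t ≠ 0`, the recurrence can be run in
both directions, so a solution on `ℤ` is determined by three consecutive values.
-/

variable {R : Type*} [CommRing R]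

def IsThirdOrderRec (r s t : R) (f : ℤ → R) : Prop :=
  ∀ n : ℤ, f n = r * f (n - 1) + s * f (n - 2) + t * f (n - 3)

namespace IsThirdOrderRec

variable {r s t : R} {f g : ℤ → R}

theorem add_three (hf : IsThirdOrderRec r s t f) (n : ℤ) :
    f (n + 3) = r * f (n + 2) + s * f (n + 1) + t * f n := by
  have h := hf (n + 3)
  rwa [show n + 3 - 1 = n + 2 by ring, show n + 3 - 2 = n + 1 by ring, add_sub_cancel_right] at h

theorem sub (hf : IsThirdOrderRec r s t f) (hg : IsThirdOrderRec r s t g) :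
    IsThirdOrderRec r s t (f - g) := fun n => by
  simp only [Pi.sub_apply, hf n, hg n]
  ring

theorem comp_add (hf : IsThirdOrderRec r s t f) (m : ℤ) :
    IsThirdOrderRec r s t (fun n => f (n + m)) := fun n => by
  simpa only [sub_add_eq_add_sub] using hf (n + m)

theorem shift_combination (hf : IsThirdOrderRec r s t f) (A B C : R) :
    IsThirdOrderRec r s t (fun n => f n * A + (f (n + 1) - r * f n) * B + t * f (n - 1) * C) :=
  fun n => by
  linear_combination (norm := ring_nf) A * hf n + B * hf (n + 1) - r * B * hf n + t * C * hf (n - 1)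

theorem eq_zero_of_zero_one_two [NoZeroDivisors R] (ht : t ≠ 0) (hf : IsThirdOrderRec r s t f)
    (h0 : f 0 = 0) (h1 : f 1 = 0) (h2 : f 2 = 0) : f = 0 := by
  suffices H : ∀ k : ℤ, f k = 0 ∧ f (k + 1) = 0 ∧ f (k + 2) = 0 from funext fun k => (H k).1
  intro k
  induction k using Int.induction_on with
  | zero => simpa using ⟨h0, h1, h2⟩
  | succ k ih =>
    obtain ⟨hk0, hk1, hk2⟩ := ih
    refine ⟨hk1, by rwa [add_assoc], ?_⟩
    rw [add_assoc, show (1 : ℤ) + 2 = 3 by norm_num, hf.add_three, hk0, hk1, hk2]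
    ring
  | pred k ih =>
    obtain ⟨hk0, hk1, hk2⟩ := ih
    refine ⟨?_, by rwa [sub_add_cancel], by rwa [show -(k : ℤ) - 1 + 2 = -k + 1 by ring]⟩
    have h := hf.add_three (-k - 1)
    rw [show -(k : ℤ) - 1 + 3 = -k + 2 by ring, show -(k : ℤ) - 1 + 2 = -k + 1 by ring,
      show -(k : ℤ) - 1 + 1 = -k by ring, hk0, hk1, hk2] at h
    exact (mul_eq_zero.mp (by linear_combination -h)).resolve_left ht

theorem eq_of_agree_zero_one_two [NoZeroDivisors R] (ht : t ≠ 0) (hf : IsThirdOrderRec r s t f)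
    (hg : IsThirdOrderRec r s t g) (h0 : f 0 = g 0) (h1 : f 1 = g 1) (h2 : f 2 = g 2) :
    f = g :=
  sub_eq_zero.mp <| (hf.sub hg).eq_zero_of_zero_one_two ht (sub_eq_zero.mpr h0)
    (sub_eq_zero.mpr h1) (sub_eq_zero.mpr h2)

end IsThirdOrderRec

theorem stmt_0_general (r s t : ℂ) (ht : t ≠ 0)
    (w u : ℤ → ℂ)
    (hw : ∀ n : ℤ, w n = r * w (n-1) + s * w (n-2) + t * w (n-3))
    (hu : ∀ n : ℤ, u n = r * u (n-1) + s * u (n-2) + t * u (n-3))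
    (hu0 : u 0 = 0) (hu1 : u 1 = 1) (hu2 : u 2 = r) :
    ∀ n m : ℤ, w (n + m) = u n * w (m+1) + (u (n+1) - r * u n) * w m + t * u (n-1) * w (m-1) := by
  intro n m
  have hu_neg : t * u (-1) = 0 := by
    linear_combination (norm := ring_nf) hu2 - hu 2 - r * hu1 - s * hu0
  have hu3 : u 3 = r * r + s := by
    linear_combination (norm := ring_nf) hu 3 + r * hu2 + s * hu1 + t * hu0
  refine congrFun (IsThirdOrderRec.eq_of_agree_zero_one_two ht (IsThirdOrderRec.comp_add hw m)
    (IsThirdOrderRec.shift_combination hu (w (m + 1)) (w m) (w (m - 1))) ?_ ?_ ?_) n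
  · linear_combination (norm := ring_nf)
      (r * w m - w (m + 1)) * hu0 - w m * hu1 - w (m - 1) * hu_neg
  · linear_combination (norm := ring_nf)
      (r * w m - w (m + 1)) * hu1 - w m * hu2 - t * w (m - 1) * hu0
  · linear_combination (norm := ring_nf)
      hw (m + 2) - w (m + 1) * hu2 - w m * (hu3 - r * hu2) - t * w (m - 1) * hu1

theorem stmt_0 (r s t a b c : ℂ) (ht : t ≠ 0)
    (w u : ℤ → ℂ)
    (hw : ∀ n : ℤ, w n = r * w (n-1) + s * w (n-2) + t * w (n-3))
    (hw0 : w 0 = a) (hw1 : w 1 = b) (hw2 : w 2 = c)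
    (hu : ∀ n : ℤ, u n = r * u (n-1) + s * u (n-2) + t * u (n-3))
    (hu0 : u 0 = 0) (hu1 : u 1 = 1) (hu2 : u 2 = r) :
    ∀ n m : ℤ, w (n + m) = u n * w (m+1) + (u (n+1) - r * u n) * w m + t * u (n-1) * w (m-1) :=
  stmt_0_general r s t ht w u hw hu hu0 hu1 hu2
end

section
/- For every integer n, u_{-n} = (u_{n-1}^2 - u_n * u_{n-2}) / t^{n-1}. -/
/-!
If `α, β, γ` are the roots of `X³ - rX² - sX - t`, then `u (-n) * t ^ (n - 1)` and
`u (n - 1) ^ 2 - u n * u (n - 2)` are both combinations of the powers of the pairwise products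
`βγ, γα, αβ`, so both satisfy `x (n + 3) = -s x (n + 2) - r t x (n + 1) + t² x n`.
They agree at `n = 0, 1, 2`, and since `t² ≠ 0` the recurrence also runs backwards, so they agree
on all of `ℤ`.
-/

def IsLinearRec₃ {R : Type*} [Semiring R] (a b c : R) (x : ℤ → R) : Prop :=
  ∀ n, x (n + 3) = a * x (n + 2) + b * x (n + 1) + c * x n

namespace IsLinearRec₃

section CommRing

variable {R : Type*} [CommRing R] {a b c : R} {x y : ℤ → R}

theorem sub (hx : IsLinearRec₃ a b c x) (hy : IsLinearRec₃ a b c y) :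
    IsLinearRec₃ a b c (x - y) := fun n => by
  simp only [Pi.sub_apply, hx n, hy n]
  ring

theorem eq_zero (hx : IsLinearRec₃ a b c x) (hc : IsLeftRegular c)
    (h0 : x 0 = 0) (h1 : x 1 = 0) (h2 : x 2 = 0) : x = 0 := by
  suffices h : ∀ n : ℤ, x n = 0 ∧ x (n + 1) = 0 ∧ x (n + 2) = 0 from funext fun n => (h n).1
  intro n
  induction n using Int.induction_on with
  | zero => exact ⟨h0, h1, h2⟩
  | succ k ih =>
    obtain ⟨hk0, hk1, hk2⟩ := ih
    refine ⟨hk1, by rwa [add_assoc], ?_⟩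
    rw [add_assoc, show (1 : ℤ) + 2 = 3 by norm_num, hx k, hk0, hk1, hk2]
    ring
  | pred k ih =>
    obtain ⟨hk0, hk1, hk2⟩ := ih
    have h := hx (-k - 1)
    simp only [show -(k : ℤ) - 1 + 3 = -k + 2 by ring, show -(k : ℤ) - 1 + 2 = -k + 1 by ring,
      sub_add_cancel, hk0, hk1, hk2] at h
    refine ⟨hc (by linear_combination -h), by rwa [sub_add_cancel], ?_⟩
    rwa [show -(k : ℤ) - 1 + 2 = -k + 1 by ring]

theorem ext (hx : IsLinearRec₃ a b c x) (hy : IsLinearRec₃ a b c y) (hc : IsLeftRegular c)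
    (h0 : x 0 = y 0) (h1 : x 1 = y 1) (h2 : x 2 = y 2) : x = y :=
  sub_eq_zero.mp <| (hx.sub hy).eq_zero hc (sub_eq_zero.mpr h0) (sub_eq_zero.mpr h1)
    (sub_eq_zero.mpr h2)

theorem sq_sub_mul (hx : IsLinearRec₃ a b c x) :
    IsLinearRec₃ (-b) (-(a * c)) (c ^ 2) (fun n => x (n - 1) ^ 2 - x n * x (n - 2)) := by
  intro n
  have e1 := hx n
  have e2 := hx (n - 1)
  have e3 := hx (n - 2)
  ring_nf at e1 e2 e3 ⊢
  simp only [e1, e2, e3]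
  ring

end CommRing

theorem reflect {K : Type*} [Field K] {a b c : K} {x : ℤ → K} (hx : IsLinearRec₃ a b c x)
    (hc : c ≠ 0) :
    IsLinearRec₃ (-b) (-(a * c)) (c ^ 2) (fun n => x (-n) * c ^ (n - 1)) := by
  intro n
  have h := hx (-(n + 3))
  simp only [show -(n + 3) + 3 = -n by ring, show -(n + 3) + 2 = -(n + 1) by ring,
    show -(n + 3) + 1 = -(n + 2) by ring] at h
  have hpow : ∀ k : ℤ, c ^ (n + k - 1) = c ^ (n - 1) * c ^ k := fun k => by
    rw [← zpow_add₀ hc]; ring_nf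
  simp only [hpow, zpow_ofNat]
  linear_combination -(c ^ (n - 1) * c ^ 2) * h

end IsLinearRec₃

theorem stmt_1 (r s t : ℂ) (ht : t ≠ 0)
    (u : ℤ → ℂ)
    (hu : ∀ n : ℤ, u n = r * u (n-1) + s * u (n-2) + t * u (n-3))
    (hu0 : u 0 = 0) (hu1 : u 1 = 1) (hu2 : u 2 = r) :
    ∀ n : ℤ, u (-n) = (u (n-1) ^ 2 - u n * u (n-2)) / t ^ (n - 1) := by
  have hrec : IsLinearRec₃ r s t u := fun n => by rw [hu (n + 3)]; ring_nf
  have hu_neg_one : u (-1) = 0 := by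
    have h := hu 2
    norm_num [hu0, hu1, hu2] at h
    exact h.resolve_left ht
  have hu_neg_two : t * u (-2) = 1 := by
    have h := hu 1
    norm_num [hu0, hu1, hu_neg_one] at h
    exact h.symm
  have key := (hrec.reflect ht).ext hrec.sq_sub_mul
    (IsRegular.of_ne_zero (pow_ne_zero 2 ht)).left (by simp [hu0, hu_neg_one])
    (by simp [hu0, hu_neg_one]) (by simpa [hu0, hu1, mul_comm] using hu_neg_two)
  intro n
  rw [eq_div_iff (zpow_ne_zero _ ht)]
  exact congrFun key n
end

section
/- For every integer n, v_{-n} = (v_n^2 - v_{2n}) / (2 t^n). -/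
/-!
Over `ℂ` write `X³ - rX² - sX - t = (X - a)(X - b)(X - c)`. Then `n ↦ aⁿ + bⁿ + cⁿ` satisfies the
recurrence and has the initial values of `v` (Newton's identities), and since `t ≠ 0` a solution of
the recurrence on `ℤ` is determined by three consecutive values, so `vₙ = aⁿ + bⁿ + cⁿ`. With
`A = aⁿ, B = bⁿ, C = cⁿ` the claim is `(A + B + C)² - (A² + B² + C²) = 2ABC (A⁻¹ + B⁻¹ + C⁻¹)`.
-/

def IsLinearRecurrence3 {R : Type*} [Mul R] [Add R] (r s t : R) (u : ℤ → R) : Prop :=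
  ∀ n : ℤ, u n = r * u (n - 1) + s * u (n - 2) + t * u (n - 3)

theorem IsLinearRecurrence3.eq_zero {R : Type*} [CommRing R] [NoZeroDivisors R] {r s t : R}
    (ht : t ≠ 0) {u : ℤ → R} (hu : IsLinearRecurrence3 r s t u)
    (h0 : u 0 = 0) (h1 : u 1 = 0) (h2 : u 2 = 0) (n : ℤ) : u n = 0 := by
  suffices ∀ n : ℤ, u n = 0 ∧ u (n + 1) = 0 ∧ u (n + 2) = 0 from (this n).1
  intro n
  induction n using Int.induction_on with
  | zero => simpa using ⟨h0, h1, h2⟩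
  | succ k ih =>
    obtain ⟨hk, hk1, hk2⟩ := ih
    have hk3 := hu (k + 3)
    rw [show (k : ℤ) + 3 - 1 = k + 2 by ring, show (k : ℤ) + 3 - 2 = k + 1 by ring,
      show (k : ℤ) + 3 - 3 = k by ring, hk, hk1, hk2] at hk3
    refine ⟨hk1, by rwa [add_assoc], ?_⟩
    rw [add_assoc, show (1 : ℤ) + 2 = 3 by norm_num, hk3]
    ring
  | pred k ih =>
    obtain ⟨hk, hk1, hk2⟩ := ih
    have hk2' := hu (-k + 2)
    rw [show -(k : ℤ) + 2 - 1 = -k + 1 by ring, show -(k : ℤ) + 2 - 2 = -k by ring,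
      show -(k : ℤ) + 2 - 3 = -k - 1 by ring, hk, hk1, hk2] at hk2'
    have htu : t * u (-k - 1) = 0 := by linear_combination -hk2'
    refine ⟨(mul_eq_zero.mp htu).resolve_left ht, by rwa [sub_add_cancel], ?_⟩
    rwa [show -(k : ℤ) - 1 + 2 = -k + 1 by ring]

theorem IsLinearRecurrence3.eq {R : Type*} [CommRing R] [NoZeroDivisors R] {r s t : R}
    (ht : t ≠ 0) {u w : ℤ → R} (hu : IsLinearRecurrence3 r s t u)
    (hw : IsLinearRecurrence3 r s t w) (h0 : u 0 = w 0) (h1 : u 1 = w 1) (h2 : u 2 = w 2) :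
    u = w := by
  have hd : IsLinearRecurrence3 r s t (u - w) := fun n => by
    simp only [Pi.sub_apply]
    linear_combination hu n - hw n
  funext n
  exact sub_eq_zero.mp (hd.eq_zero ht (sub_eq_zero.mpr h0) (sub_eq_zero.mpr h1)
    (sub_eq_zero.mpr h2) n)

variable {K : Type*} [Field K]

open Polynomial in
theorem exists_vieta_cubic [IsAlgClosed K] (r s t : K) :
    ∃ a b c : K, r = a + b + c ∧ s = -(a * b + b * c + c * a) ∧ t = a * b * c := by
  obtain ⟨a, ha⟩ := IsAlgClosed.exists_root (X ^ 3 - C r * X ^ 2 - C s * X - C t)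
    (ne_of_eq_of_ne (b := 3) (by compute_degree!) (by decide))
  -- the quotient of the cubic by `X - a`
  obtain ⟨b, hb⟩ := IsAlgClosed.exists_root (X ^ 2 + C (a - r) * X + C (a ^ 2 - a * r - s))
    (ne_of_eq_of_ne (b := 2) (by compute_degree!) (by decide))
  simp only [IsRoot, eval_sub, eval_add, eval_mul, eval_pow, eval_X, eval_C] at ha hb
  refine ⟨a, b, r - a - b, by ring, by linear_combination -hb, by linear_combination -ha + a * hb⟩

theorem zpow_eq_of_pow_three_eq {x r s t : K} (hx : x ≠ 0) (h : x ^ 3 = r * x ^ 2 + s * x + t)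
    (n : ℤ) : x ^ n = r * x ^ (n - 1) + s * x ^ (n - 2) + t * x ^ (n - 3) := by
  obtain ⟨m, rfl⟩ : ∃ m, n = m + 3 := ⟨n - 3, by ring⟩
  rw [add_sub_cancel_right, show m + 3 - 1 = m + 2 by ring, show m + 3 - 2 = m + 1 by ring]
  simp only [zpow_add₀ hx, zpow_ofNat]
  linear_combination x ^ m * h

theorem isLinearRecurrence3_zpow_add_zpow_add_zpow {a b c : K} (ha : a ≠ 0) (hb : b ≠ 0)
    (hc : c ≠ 0) :
    IsLinearRecurrence3 (a + b + c) (-(a * b + b * c + c * a)) (a * b * c)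
      (fun n => a ^ n + b ^ n + c ^ n) := fun n => by
  have hroot : ∀ x ∈ ({a, b, c} : Set K),
      x ^ 3 = (a + b + c) * x ^ 2 + -(a * b + b * c + c * a) * x + a * b * c := by
    rintro x (rfl | rfl | rfl) <;> ring
  dsimp only
  rw [zpow_eq_of_pow_three_eq ha (hroot a (by simp)) n, zpow_eq_of_pow_three_eq hb
    (hroot b (by simp)) n, zpow_eq_of_pow_three_eq hc (hroot c (by simp)) n]
  ring

theorem inv_add_inv_add_inv_eq {A B C : K} (hA : A ≠ 0) (hB : B ≠ 0) (hC : C ≠ 0)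
    (h2 : (2 : K) ≠ 0) :
    A⁻¹ + B⁻¹ + C⁻¹ = ((A + B + C) ^ 2 - (A ^ 2 + B ^ 2 + C ^ 2)) / (2 * (A * B * C)) := by
  field_simp
  ring

theorem stmt_2 (r s t : ℂ) (ht : t ≠ 0)
    (v : ℤ → ℂ)
    (hv : ∀ n : ℤ, v n = r * v (n-1) + s * v (n-2) + t * v (n-3))
    (hv0 : v 0 = 3) (hv1 : v 1 = r) (hv2 : v 2 = r ^ 2 + 2 * s) :
    ∀ n : ℤ, v (-n) = (v n ^ 2 - v (2 * n)) / (2 * t ^ n) := by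
  obtain ⟨a, b, c, rfl, rfl, rfl⟩ := exists_vieta_cubic r s t
  have ha : a ≠ 0 := by rintro rfl; simp at ht
  have hb : b ≠ 0 := by rintro rfl; simp at ht
  have hc : c ≠ 0 := by rintro rfl; simp at ht
  obtain rfl : v = fun n => a ^ n + b ^ n + c ^ n :=
    IsLinearRecurrence3.eq ht hv (isLinearRecurrence3_zpow_add_zpow_add_zpow ha hb hc)
      (by rw [hv0]; norm_num) (by simp [hv1]) (by rw [hv2]; norm_cast; ring)
  intro n
  simp only [zpow_neg, mul_comm 2 n, zpow_mul, mul_zpow]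
  exact inv_add_inv_add_inv_eq (zpow_ne_zero n ha) (zpow_ne_zero n hb) (zpow_ne_zero n hc)
    two_ne_zero
end

section
/- For all integers n, v_n = r*u_n + 2s*u_{n-1} + 3t*u_{n-2}. -/
/-!
Both `v` and `n ↦ r u_n + 2s u_{n-1} + 3t u_{n-2}` solve the recurrence, since its solutions form a
shift-invariant submodule. Because `t ≠ 0` the recurrence can be run backwards as well as forwards,
so a solution on `ℤ` is determined by its values at `0, 1, 2`; there the two sides agree once
`u_{-1} = 0` and `t u_{-2} = 1` are read off the recurrence.
-/

namespace ThirdOrderRecurrence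

variable {R : Type*} [CommRing R]

def solutions (r s t : R) : Submodule R (ℤ → R) where
  carrier := {x | ∀ n, x n = r * x (n - 1) + s * x (n - 2) + t * x (n - 3)}
  zero_mem' := fun _ => by simp
  add_mem' := fun {x y} hx hy n => by
    simp only [Pi.add_apply]
    rw [hx n, hy n]
    ring
  smul_mem' := fun c x hx n => by
    simp only [Pi.smul_apply, smul_eq_mul]
    rw [hx n]
    ring

variable {r s t : R} {x : ℤ → R}

theorem comp_sub_mem (hx : x ∈ solutions r s t) (k : ℤ) :
    (fun n => x (n - k)) ∈ solutions r s t := fun n => by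
  simpa only [sub_right_comm _ k] using hx (n - k)

theorem eq_zero_of_apply_zero_of_apply_one_of_apply_two [NoZeroDivisors R]
    (hx : x ∈ solutions r s t) (ht : t ≠ 0) (h0 : x 0 = 0) (h1 : x 1 = 0) (h2 : x 2 = 0) : x = 0 := by
  suffices h : ∀ n : ℤ, x n = 0 ∧ x (n + 1) = 0 ∧ x (n + 2) = 0 from funext fun n => (h n).1
  intro n
  induction n using Int.induction_on with
  | zero => simpa using ⟨h0, h1, h2⟩
  | succ k ih =>
    obtain ⟨hk0, hk1, hk2⟩ := ih
    have hk3 : x (k + 3) = 0 := by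
      simpa only [show (k : ℤ) + 3 - 1 = k + 2 by ring, show (k : ℤ) + 3 - 2 = k + 1 by ring,
        add_sub_cancel_right, hk0, hk1, hk2, mul_zero, add_zero] using hx (k + 3)
    exact ⟨hk1, by rwa [add_assoc], by rwa [add_assoc]⟩
  | pred k ih =>
    obtain ⟨hk0, hk1, hk2⟩ := ih
    have hkm1 : x (-k - 1) = 0 := by
      have := hx (-k + 2)
      simp only [show -(k : ℤ) + 2 - 1 = -k + 1 by ring, show -(k : ℤ) + 2 - 2 = -k by ring,
        show -(k : ℤ) + 2 - 3 = -k - 1 by ring, hk0, hk1, hk2, mul_zero, zero_add] at this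
      exact (mul_eq_zero.mp this.symm).resolve_left ht
    exact ⟨hkm1, by rwa [sub_add_cancel], by rwa [show -(k : ℤ) - 1 + 2 = -k + 1 by ring]⟩

end ThirdOrderRecurrence

open ThirdOrderRecurrence in
theorem stmt_4 (r s t : ℂ) (ht : t ≠ 0)
    (u v : ℤ → ℂ)
    (hu : ∀ n : ℤ, u n = r * u (n-1) + s * u (n-2) + t * u (n-3))
    (hu0 : u 0 = 0) (hu1 : u 1 = 1) (hu2 : u 2 = r)
    (hv : ∀ n : ℤ, v n = r * v (n-1) + s * v (n-2) + t * v (n-3))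
    (hv0 : v 0 = 3) (hv1 : v 1 = r) (hv2 : v 2 = r ^ 2 + 2 * s) :
    ∀ n : ℤ, v n = r * u n + 2 * s * u (n-1) + 3 * t * u (n-2) := by
  have hu_neg1 : u (-1) = 0 := by
    have := hu 2
    norm_num [hu0, hu1, hu2] at this
    exact this.resolve_left ht
  have hu_neg2 : t * u (-2) = 1 := by
    have := hu 1
    norm_num [hu0, hu1, hu_neg1] at this
    exact this.symm
  set w : ℤ → ℂ := fun n => v n - (r * u n + 2 * s * u (n-1) + 3 * t * u (n-2)) with hw_def
  have hw : w ∈ solutions r s t :=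
    sub_mem hv <| add_mem
      (add_mem (Submodule.smul_mem _ r hu) (Submodule.smul_mem _ (2 * s) (comp_sub_mem hu 1)))
      (Submodule.smul_mem _ (3 * t) (comp_sub_mem hu 2))
  have hw_zero := eq_zero_of_apply_zero_of_apply_one_of_apply_two hw ht
    (by norm_num [hw_def, hv0, hu0, hu_neg1]; linear_combination -3 * hu_neg2)
    (by norm_num [hw_def, hv1, hu1, hu0, hu_neg1])
    (by norm_num [hw_def, hv2, hu2, hu1, hu0]; ring)
  exact fun n => sub_eq_zero.mp (congrFun hw_zero n)
end

section
/- If α, β, γ are the (distinct) roots of x^3 - r x^2 - s x - t, then for every integer n, α^n = u_{n-1} α^2 + (u_n - r u_{n-1}) α + t u_{n-2}. -/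
/-!
Multiplication by α sends the quadratic `u (n-1) α² + (u n - r u (n-1)) α + t u (n-2)` to the
same expression at `n + 1`: this is the recurrence for `u` combined with `α³ = rα² + sα + t`.
The expression equals `1` at `n = 0`, so it equals `α ^ n` for every integer `n`.
-/

theorem eq_zpow_mul_of_map_add_one {M : Type*} [GroupWithZero M] {a : M} (ha : a ≠ 0)
    {f : ℤ → M} (hf : ∀ n, f (n + 1) = a * f n) (n : ℤ) : f n = a ^ n * f 0 := by
  induction n using Int.induction_on with
  | zero => simp
  | succ k ih => rw [hf, ih, add_comm, zpow_one_add₀ ha, mul_assoc]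
  | pred k ih =>
    have hk : f (-k) = a * f (-k - 1) := by simpa using hf (-k - 1)
    rw [← inv_mul_cancel_left₀ ha (f (-k - 1)), ← hk, ih, sub_eq_neg_add, zpow_add₀ ha,
      zpow_neg_one, mul_assoc]

section

variable {K : Type*} [CommRing K] {r s t : K} {u : ℤ → K}

/-- The remainder of `X ^ n` modulo `X³ - rX² - sX - t`, evaluated at `α`. -/
def powRemainder (r t : K) (u : ℤ → K) (α : K) (n : ℤ) : K :=
  u (n - 1) * α ^ 2 + (u n - r * u (n - 1)) * α + t * u (n - 2)

theorem mul_powRemainder {α : K} (hroot : α ^ 3 = r * α ^ 2 + s * α + t)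
    (hu : ∀ n : ℤ, u n = r * u (n - 1) + s * u (n - 2) + t * u (n - 3)) (n : ℤ) :
    α * powRemainder r t u α n = powRemainder r t u α (n + 1) := by
  have hn := hu (n + 1)
  simp only [powRemainder, add_sub_cancel_right, show n + 1 - 2 = n - 1 by ring,
    show n + 1 - 3 = n - 2 by ring] at hn ⊢
  linear_combination u (n - 1) * hroot - α * hn

theorem powRemainder_zero [NoZeroDivisors K] (ht : t ≠ 0) (α : K)
    (hu : ∀ n : ℤ, u n = r * u (n - 1) + s * u (n - 2) + t * u (n - 3))
    (hu0 : u 0 = 0) (hu1 : u 1 = 1) (hu2 : u 2 = r) :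
    powRemainder r t u α 0 = 1 := by
  have hu_neg_one : u (-1) = 0 := by
    have h := hu 2
    norm_num [hu0, hu1, hu2] at h
    exact h.resolve_left ht
  have hu_neg_two : t * u (-2) = 1 := by
    have h := hu 1
    norm_num [hu0, hu1, hu_neg_one] at h
    exact h.symm
  simp [powRemainder, hu0, hu_neg_one, hu_neg_two]

end

theorem stmt_5 (r s t α : ℂ) (ht : t ≠ 0) (hα : α ≠ 0)
    (hroot : α ^ 3 = r * α ^ 2 + s * α + t)
    (u : ℤ → ℂ)
    (hu : ∀ n : ℤ, u n = r * u (n-1) + s * u (n-2) + t * u (n-3))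
    (hu0 : u 0 = 0) (hu1 : u 1 = 1) (hu2 : u 2 = r) :
    ∀ n : ℤ, α ^ n = u (n-1) * α ^ 2 + (u n - r * u (n-1)) * α + t * u (n-2) := by
  intro n
  have h := eq_zpow_mul_of_map_add_one hα (fun m ↦ (mul_powRemainder hroot hu m).symm) n
  rw [powRemainder_zero ht α hu hu0 hu1 hu2, mul_one] at h
  exact h.symm
end

section
/- For all natural numbers k, the partial sum ∑_{j=0}^{k} w_j = (t*w_k + (r-1)*(a + b - w_{k+1}) + w_{k+2} + a*s - c) / (r + s + t - 1), provided r + s + t ≠ 1. -/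
open Finset

/- Summing the recurrence `w (n+3) = r w (n+2) + s w (n+1) + t w n` over `n < k` expresses
`∑_{j ≤ k+2} w j` through `r ∑_{j ≤ k+1} w j + s ∑_{j ≤ k} w j + t ∑_{j < k} w j`; writing every sum as
`S = ∑_{j ≤ k} w j` plus boundary terms leaves `(r + s + t - 1) S` equal to boundary terms, which is
the claimed closed form once `r + s + t ≠ 1`. Over a commutative ring this identity, with the division
cleared, holds by induction on `k`. -/

theorem mul_sum_range_succ_of_third_order_recurrence {R : Type*} [CommRing R] {r s t : R}
    {w : ℕ → R} (hw : ∀ n, w (n + 3) = r * w (n + 2) + s * w (n + 1) + t * w n) (k : ℕ) :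
    (r + s + t - 1) * ∑ j ∈ range (k + 1), w j =
      t * w k + (r - 1) * (w 0 + w 1 - w (k + 1)) + w (k + 2) + w 0 * s - w 2 := by
  induction k with
  | zero => rw [sum_range_one]; ring
  | succ k ih =>
    rw [sum_range_succ, mul_add, ih, show k + 1 + 2 = k + 3 by rfl, hw k]
    ring

theorem stmt_6_general (r s t a b c : ℂ) (hrst : r + s + t ≠ 1)
    (w : ℕ → ℂ)
    (hw : ∀ n : ℕ, 3 ≤ n → w n = r * w (n-1) + s * w (n-2) + t * w (n-3))
    (hw0 : w 0 = a) (hw1 : w 1 = b) (hw2 : w 2 = c) :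
    ∀ k : ℕ, ∑ j ∈ Finset.range (k+1), w j =
      (t * w k + (r - 1) * (a + b - w (k+1)) + w (k+2) + a * s - c) / (r + s + t - 1) := by
  intro k
  have hw' : ∀ n, w (n + 3) = r * w (n + 2) + s * w (n + 1) + t * w n :=
    fun n => hw (n + 3) (by omega)
  rw [eq_div_iff (sub_ne_zero.mpr hrst), mul_comm, ← hw0, ← hw1, ← hw2]
  exact mul_sum_range_succ_of_third_order_recurrence hw' k

theorem stmt_6 (r s t a b c : ℂ) (ht : t ≠ 0) (hrst : r + s + t ≠ 1)
    (w : ℕ → ℂ)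
    (hw : ∀ n : ℕ, 3 ≤ n → w n = r * w (n-1) + s * w (n-2) + t * w (n-3))
    (hw0 : w 0 = a) (hw1 : w 1 = b) (hw2 : w 2 = c) :
    ∀ k : ℕ, ∑ j ∈ Finset.range (k+1), w j =
      (t * w k + (r - 1) * (a + b - w (k+1)) + w (k+2) + a * s - c) / (r + s + t - 1) :=
  stmt_6_general r s t a b c hrst w hw hw0 hw1 hw2
end

section
/- For all integers n, v_{2n} = u_n v_{n+1} + (u_{n+1} - r u_n) v_n + t u_{n-1} v_{n-1}. -/
/-!
For fixed `n`, both `m ↦ v (n + m)` and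
`m ↦ u m * v (n + 1) + (u (m + 1) - r * u m) * v n + t * u (m - 1) * v (n - 1)` solve the
recurrence, and they agree at `m = 0, 1, 2`. As `t ≠ 0` the recurrence can also be run
backwards, so a solution on `ℤ` is determined by three consecutive values; the theorem is the
case `m = n`.
-/

variable {R : Type*} [CommRing R]

def IsThirdOrderRecurrence (r s t : R) (x : ℤ → R) : Prop :=
  ∀ n : ℤ, x n = r * x (n - 1) + s * x (n - 2) + t * x (n - 3)

namespace IsThirdOrderRecurrence

variable {r s t : R} {x y u v : ℤ → R}

theorem sub (hx : IsThirdOrderRecurrence r s t x) (hy : IsThirdOrderRecurrence r s t y) :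
    IsThirdOrderRecurrence r s t (x - y) := fun n => by
  simp only [Pi.sub_apply]
  linear_combination hx n - hy n

theorem eq_zero_of_init [IsDomain R] (ht : t ≠ 0) (hx : IsThirdOrderRecurrence r s t x)
    (h0 : x 0 = 0) (h1 : x 1 = 0) (h2 : x 2 = 0) (n : ℤ) : x n = 0 := by
  suffices ∀ m : ℤ, x m = 0 ∧ x (m + 1) = 0 ∧ x (m + 2) = 0 from (this n).1
  intro m
  induction m using Int.induction_on with
  | zero => simpa using ⟨h0, h1, h2⟩
  | succ i ih =>
    obtain ⟨hi, hi1, hi2⟩ := ih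
    refine ⟨hi1, by rwa [add_assoc], ?_⟩
    linear_combination (norm := ring_nf) hx (i + 3) + r * hi2 + s * hi1 + t * hi
  | pred i ih =>
    obtain ⟨hi, hi1, hi2⟩ := ih
    have hti : t * x (-i - 1) = 0 := by
      linear_combination (norm := ring_nf) -hx (-i + 2) + hi2 - r * hi1 - s * hi
    exact ⟨(mul_eq_zero.mp hti).resolve_left ht, by simpa using hi,
      by simpa [sub_add] using hi1⟩

theorem eq_of_init [IsDomain R] (ht : t ≠ 0) (hx : IsThirdOrderRecurrence r s t x)
    (hy : IsThirdOrderRecurrence r s t y) (h0 : x 0 = y 0) (h1 : x 1 = y 1) (h2 : x 2 = y 2) :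
    x = y :=
  funext fun n => sub_eq_zero.mp <|
    (hx.sub hy).eq_zero_of_init ht (sub_eq_zero.mpr h0) (sub_eq_zero.mpr h1) (sub_eq_zero.mpr h2) n

theorem comp_add (hx : IsThirdOrderRecurrence r s t x) (k : ℤ) :
    IsThirdOrderRecurrence r s t (fun m => x (k + m)) := fun m => by
  simpa only [add_sub_assoc] using hx (k + m)

theorem combination (hu : IsThirdOrderRecurrence r s t u) (a b c : R) :
    IsThirdOrderRecurrence r s t
      (fun m => u m * a + (u (m + 1) - r * u m) * b + t * u (m - 1) * c) := fun m => by
  linear_combination (norm := ring_nf) a * hu m + b * hu (m + 1) - r * b * hu m + t * c * hu (m - 1)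

theorem apply_add [IsDomain R] (ht : t ≠ 0) (hu : IsThirdOrderRecurrence r s t u)
    (hu0 : u 0 = 0) (hu1 : u 1 = 1) (hu2 : u 2 = r) (hv : IsThirdOrderRecurrence r s t v)
    (n m : ℤ) :
    v (n + m) = u m * v (n + 1) + (u (m + 1) - r * u m) * v n + t * u (m - 1) * v (n - 1) := by
  have htu : t * u (-1) = 0 := by
    linear_combination (norm := ring_nf) -hu 2 + hu2 - r * hu1 - s * hu0
  have hu3 : u 3 = r ^ 2 + s := by
    linear_combination (norm := ring_nf) hu 3 + r * hu2 + s * hu1 + t * hu0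
  refine congrFun (eq_of_init ht (hv.comp_add n) (hu.combination _ _ _) ?_ ?_ ?_) m
  · simp [hu0, hu1, htu]
  · simp [hu0, hu1, hu2]
  · linear_combination (norm := ring_nf) hv (n + 2) - (v (n + 1) - r * v n) * hu2 - v n * hu3
      - t * v (n - 1) * hu1

end IsThirdOrderRecurrence

theorem stmt_9_general (r s t : ℂ) (ht : t ≠ 0)
    (u v : ℤ → ℂ)
    (hu : ∀ n : ℤ, u n = r * u (n-1) + s * u (n-2) + t * u (n-3))
    (hu0 : u 0 = 0) (hu1 : u 1 = 1) (hu2 : u 2 = r)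
    (hv : ∀ n : ℤ, v n = r * v (n-1) + s * v (n-2) + t * v (n-3)) :
    ∀ n : ℤ, v (2 * n) = u n * v (n+1) + (u (n+1) - r * u n) * v n + t * u (n-1) * v (n-1) := by
  intro n
  rw [two_mul]
  exact IsThirdOrderRecurrence.apply_add ht hu hu0 hu1 hu2 hv n n

theorem stmt_9 (r s t : ℂ) (ht : t ≠ 0)
    (u v : ℤ → ℂ)
    (hu : ∀ n : ℤ, u n = r * u (n-1) + s * u (n-2) + t * u (n-3))
    (hu0 : u 0 = 0) (hu1 : u 1 = 1) (hu2 : u 2 = r)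
    (hv : ∀ n : ℤ, v n = r * v (n-1) + s * v (n-2) + t * v (n-3))
    (hv0 : v 0 = 3) (hv1 : v 1 = r) (hv2 : v 2 = r ^ 2 + 2 * s) :
    ∀ n : ℤ, v (2 * n) = u n * v (n+1) + (u (n+1) - r * u n) * v n + t * u (n-1) * v (n-1) :=
  stmt_9_general r s t ht u v hu hu0 hu1 hu2 hv
end

section
/- For all integers n and m, w_{n+m} = v_m w_n - t^m v_{-m} w_{n-m} + t^m w_{n-2m} (Howard's identity). -/
/-!
Let `M` be the companion matrix of `X³ - r X² - s X - t`. For a solution `x` of the recurrence,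
`M` shifts the window `(x (j-2), x (j-1), x j)` by one step, so `M ^ k` shifts it by `k` for
every `k : ℤ`; in particular a solution is determined by its values at `0, 1, 2`, and hence
`v k = tr (M ^ k)`. Cayley–Hamilton for the `3 × 3` matrix `A = M ^ m` reads
`A³ = tr A • A² - tr (adj A) • A + det A • 1`, where `tr A = v m`, `det A = t ^ m` and
`tr (adj A) = det A * tr A⁻¹ = t ^ m * v (-m)`. Applying it to the window ending at `n - 2 m`
and reading off the last coordinate gives Howard's identity.
-/

open Matrix

namespace Matrix

theorem pow_three_fin_three {R : Type*} [CommRing R] (A : Matrix (Fin 3) (Fin 3) R) :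
    A ^ 3 = A.trace • A ^ 2 - A.adjugate.trace • A + A.det • 1 := by
  ext i j
  fin_cases i <;> fin_cases j <;>
    simp [pow_succ, mul_apply, Fin.sum_univ_three, trace_fin_three, det_fin_three,
      adjugate_fin_three] <;> ring

variable {n : Type*} [Fintype n] [DecidableEq n]

theorem adjugate_eq_det_smul_inv {R : Type*} [CommRing R] {A : Matrix n n R} (h : IsUnit A.det) :
    A.adjugate = A.det • A⁻¹ := by
  rw [inv_def, smul_smul, Ring.mul_inverse_cancel _ h, one_smul]

theorem det_zpow {K : Type*} [Field K] (A : Matrix n n K) (k : ℤ) :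
    (A ^ k).det = A.det ^ k := by
  cases k with
  | ofNat k => simp [det_pow]
  | negSucc k => rw [zpow_negSucc, zpow_negSucc, det_nonsing_inv, det_pow, Ring.inverse_eq_inv']

end Matrix

section ThirdOrderRecurrence

variable {K : Type*}

def rec3Window (x : ℤ → K) (j : ℤ) : Fin 3 → K :=
  ![x (j - 2), x (j - 1), x j]

theorem rec3Window_apply_two (x : ℤ → K) (j : ℤ) : rec3Window x j 2 = x j := rfl

variable [Field K] (r s t : K)

def IsRec3Solution (x : ℤ → K) : Prop :=
  ∀ n : ℤ, x n = r * x (n - 1) + s * x (n - 2) + t * x (n - 3)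

def rec3Companion : Matrix (Fin 3) (Fin 3) K :=
  !![0, 1, 0; 0, 0, 1; t, s, r]

variable {r s t}

theorem det_rec3Companion : (rec3Companion r s t).det = t := by
  simp [rec3Companion, det_fin_three]

theorem trace_rec3Companion : (rec3Companion r s t).trace = r := by
  simp [rec3Companion, trace_fin_three]

theorem trace_adjugate_rec3Companion : (rec3Companion r s t).adjugate.trace = -s := by
  simp [rec3Companion, trace_fin_three, adjugate_fin_three]

theorem isUnit_det_rec3Companion (ht : t ≠ 0) : IsUnit (rec3Companion r s t).det := by
  rw [det_rec3Companion]
  exact ht.isUnit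

theorem rec3Companion_pow_three :
    rec3Companion r s t ^ 3 = r • rec3Companion r s t ^ 2 + s • rec3Companion r s t + t • 1 := by
  rw [pow_three_fin_three, trace_rec3Companion, trace_adjugate_rec3Companion, det_rec3Companion,
    neg_smul, sub_neg_eq_add]

theorem rec3Companion_mulVec_rec3Window {x : ℤ → K} (hx : IsRec3Solution r s t x) (j : ℤ) :
    rec3Companion r s t *ᵥ rec3Window x j = rec3Window x (j + 1) := by
  ext i
  fin_cases i <;> simp [rec3Companion, rec3Window, hx (j + 1)] <;> ring_nf

theorem rec3Companion_zpow_mulVec_rec3Window (ht : t ≠ 0) {x : ℤ → K}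
    (hx : IsRec3Solution r s t x) (k j : ℤ) :
    rec3Companion r s t ^ k *ᵥ rec3Window x j = rec3Window x (j + k) := by
  have hu := isUnit_det_rec3Companion (r := r) (s := s) ht
  induction k using Int.induction_on generalizing j with
  | zero => simp
  | succ k ih =>
    rw [zpow_add_one hu, ← mulVec_mulVec, rec3Companion_mulVec_rec3Window hx, ih]
    congr 1
    ring
  | pred k ih =>
    have hj : rec3Window x j = rec3Companion r s t *ᵥ rec3Window x (j - 1) := by
      rw [rec3Companion_mulVec_rec3Window hx, sub_add_cancel]
    rw [hj, mulVec_mulVec, ← zpow_add_one hu, sub_add_cancel, ih]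
    congr 1
    ring

theorem IsRec3Solution.eq_of_eq_init (ht : t ≠ 0) {x y : ℤ → K} (hx : IsRec3Solution r s t x)
    (hy : IsRec3Solution r s t y) (h0 : x 0 = y 0) (h1 : x 1 = y 1) (h2 : x 2 = y 2) :
    x = y := by
  have hinit : rec3Window x 2 = rec3Window y 2 := by
    simp [rec3Window, h0, h1, h2]
  funext n
  have := congrArg (fun u => (rec3Companion r s t ^ (n - 2) *ᵥ u) 2) hinit
  simpa only [rec3Companion_zpow_mulVec_rec3Window ht hx,
    rec3Companion_zpow_mulVec_rec3Window ht hy, add_sub_cancel, rec3Window_apply_two] using this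

theorem isRec3Solution_trace_rec3Companion_zpow (ht : t ≠ 0) :
    IsRec3Solution r s t fun k => (rec3Companion r s t ^ k).trace := by
  set M := rec3Companion r s t
  have hu : IsUnit M.det := isUnit_det_rec3Companion ht
  intro k
  have h3 : M ^ k = M ^ (k - 3) * M ^ 3 := by
    rw [← zpow_natCast, ← zpow_add hu]
    congr 1
    omega
  have h2 : M ^ (k - 3) * M ^ 2 = M ^ (k - 1) := by
    rw [← zpow_natCast, ← zpow_add hu]
    congr 1
    omega
  have h1 : M ^ (k - 3) * M = M ^ (k - 2) := by
    rw [← zpow_add_one hu]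
    congr 1
    omega
  dsimp only
  rw [h3, rec3Companion_pow_three, mul_add, mul_add, mul_smul_comm, mul_smul_comm, mul_smul_comm,
    h2, h1, mul_one]
  simp only [trace_add, trace_smul, smul_eq_mul]

theorem trace_rec3Companion_zpow (ht : t ≠ 0) {v : ℤ → K} (hv : IsRec3Solution r s t v)
    (hv0 : v 0 = 3) (hv1 : v 1 = r) (hv2 : v 2 = r ^ 2 + 2 * s) (k : ℤ) :
    (rec3Companion r s t ^ k).trace = v k := by
  refine congrFun ((isRec3Solution_trace_rec3Companion_zpow ht).eq_of_eq_init ht hv ?_ ?_ ?_) k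
  · simp [hv0]
  · simp [hv1, trace_rec3Companion]
  · simp [hv2, rec3Companion, trace_fin_three, sq]
    ring

theorem trace_adjugate_rec3Companion_zpow (ht : t ≠ 0) {v : ℤ → K} (hv : IsRec3Solution r s t v)
    (hv0 : v 0 = 3) (hv1 : v 1 = r) (hv2 : v 2 = r ^ 2 + 2 * s) (k : ℤ) :
    (rec3Companion r s t ^ k).adjugate.trace = t ^ k * v (-k) := by
  have hu := isUnit_det_rec3Companion (r := r) (s := s) ht
  rw [adjugate_eq_det_smul_inv (hu.det_zpow k), trace_smul, det_zpow, det_rec3Companion,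
    ← zpow_neg hu, trace_rec3Companion_zpow ht hv hv0 hv1 hv2, smul_eq_mul]

theorem rec3Companion_zpow_pow_three (ht : t ≠ 0) {v : ℤ → K} (hv : IsRec3Solution r s t v)
    (hv0 : v 0 = 3) (hv1 : v 1 = r) (hv2 : v 2 = r ^ 2 + 2 * s) (m : ℤ) :
    (rec3Companion r s t ^ m) ^ 3 = v m • (rec3Companion r s t ^ m) ^ 2 -
      (t ^ m * v (-m)) • rec3Companion r s t ^ m + t ^ m • 1 := by
  rw [pow_three_fin_three, trace_rec3Companion_zpow ht hv hv0 hv1 hv2,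
    trace_adjugate_rec3Companion_zpow ht hv hv0 hv1 hv2, det_zpow, det_rec3Companion]

end ThirdOrderRecurrence

theorem stmt_13_general (r s t : ℂ) (ht : t ≠ 0)
    (w v : ℤ → ℂ)
    (hw : ∀ n : ℤ, w n = r * w (n-1) + s * w (n-2) + t * w (n-3))
    (hv : ∀ n : ℤ, v n = r * v (n-1) + s * v (n-2) + t * v (n-3))
    (hv0 : v 0 = 3) (hv1 : v 1 = r) (hv2 : v 2 = r ^ 2 + 2 * s) :
    ∀ n m : ℤ, w (n + m) = v m * w n - t ^ m * v (-m) * w (n - m) + t ^ m * w (n - 2 * m) := by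
  intro n m
  have h := congrArg (fun X => (X *ᵥ rec3Window w (n - 2 * m)) 2)
    (rec3Companion_zpow_pow_three ht hv hv0 hv1 hv2 m)
  set M := rec3Companion r s t
  have hu : IsUnit M.det := isUnit_det_rec3Companion ht
  have hshift : ∀ k : ℕ, (M ^ m) ^ k *ᵥ rec3Window w (n - 2 * m) =
      rec3Window w (n - 2 * m + m * k) := fun k => by
    rw [← zpow_natCast, ← zpow_mul M hu, rec3Companion_zpow_mulVec_rec3Window ht hw]
  have hshift1 : M ^ m *ᵥ rec3Window w (n - 2 * m) = rec3Window w (n - 2 * m + m) := by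
    simpa using hshift 1
  simp only [add_mulVec, sub_mulVec, smul_mulVec, one_mulVec, hshift, hshift1, Pi.add_apply,
    Pi.sub_apply, Pi.smul_apply, smul_eq_mul, rec3Window_apply_two, Nat.cast_ofNat] at h
  rwa [show n - 2 * m + m * 3 = n + m by ring, show n - 2 * m + m * 2 = n by ring,
    show n - 2 * m + m = n - m by ring] at h

theorem stmt_13 (r s t a b c : ℂ) (ht : t ≠ 0)
    (w v : ℤ → ℂ)
    (hw : ∀ n : ℤ, w n = r * w (n-1) + s * w (n-2) + t * w (n-3))
    (hw0 : w 0 = a) (hw1 : w 1 = b) (hw2 : w 2 = c)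
    (hv : ∀ n : ℤ, v n = r * v (n-1) + s * v (n-2) + t * v (n-3))
    (hv0 : v 0 = 3) (hv1 : v 1 = r) (hv2 : v 2 = r ^ 2 + 2 * s) :
    ∀ n m : ℤ, w (n + m) = v m * w n - t ^ m * v (-m) * w (n - m) + t ^ m * w (n - 2 * m) :=
  stmt_13_general r s t ht w v hw hv hv0 hv1 hv2
end

section
/- For all integers n and m, 2 w_{n+m} = 2 v_m w_n - (v_m^2 - v_{2m}) w_{n-m} + 2 t^m w_{n-2m}. -/
/-!
Let `C` be the companion matrix of `X³ - r X² - s X - t`; it is invertible as `det C = t ≠ 0`.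
A solution of the recurrence is determined by three consecutive values, so every solution is
`x n = (C ^ n *ᵥ u) 2` for a fixed vector `u`, and `v n = trace (C ^ n)`. The identity is then
Cayley–Hamilton for `A = C ^ m`, whose characteristic polynomial has coefficients `trace A = v m`,
`(trace A ^ 2 - trace (A ^ 2)) / 2 = (v m ^ 2 - v (2 * m)) / 2` and `det A = t ^ m`, multiplied by
`C ^ (n - 2 * m)` and doubled to clear the denominator.
-/

open Matrix

section LinearRecurrence

variable {K V W : Type*} [Field K] [AddCommGroup V] [Module K V] [AddCommGroup W] [Module K W]
  {r s t : K}

def IsLinearRec3 (r s t : K) (x : ℤ → V) : Prop :=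
  ∀ n, x n = r • x (n - 1) + s • x (n - 2) + t • x (n - 3)

namespace IsLinearRec3

lemma add_three {x : ℤ → V} (hx : IsLinearRec3 r s t x) (n : ℤ) :
    x (n + 3) = r • x (n + 2) + s • x (n + 1) + t • x n := by
  have := hx (n + 3)
  rwa [show n + 3 - 1 = n + 2 by ring, show n + 3 - 2 = n + 1 by ring,
    add_sub_cancel_right] at this

lemma map {x : ℤ → V} (hx : IsLinearRec3 r s t x) (φ : V →ₗ[K] W) :
    IsLinearRec3 r s t (φ ∘ x) := by
  intro n
  simp [hx n]

lemma sub {x y : ℤ → V} (hx : IsLinearRec3 r s t x) (hy : IsLinearRec3 r s t y) :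
    IsLinearRec3 r s t (x - y) := by
  intro n
  simp only [Pi.sub_apply, hx n, hy n, smul_sub]
  abel

lemma eq_zero (ht : t ≠ 0) {x : ℤ → V} (hx : IsLinearRec3 r s t x)
    (h0 : x 0 = 0) (h1 : x 1 = 0) (h2 : x 2 = 0) : x = 0 := by
  have key : ∀ n : ℤ, x n = 0 ∧ x (n + 1) = 0 ∧ x (n + 2) = 0 := by
    intro n
    induction n using Int.induction_on with
    | zero => simpa using ⟨h0, h1, h2⟩
    | succ k ih =>
      obtain ⟨e0, e1, e2⟩ := ih
      refine ⟨e1, by rwa [add_assoc], ?_⟩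
      rw [show (k : ℤ) + 1 + 2 = k + 3 by ring, hx.add_three, e0, e1, e2]
      simp
    | pred k ih =>
      obtain ⟨e0, e1, e2⟩ := ih
      have h := hx.add_three (-k - 1)
      rw [show -(k : ℤ) - 1 + 3 = -k + 2 by ring, show -(k : ℤ) - 1 + 2 = -k + 1 by ring,
        show -(k : ℤ) - 1 + 1 = -k by ring, e0, e1, e2] at h
      refine ⟨?_, by rwa [sub_add_cancel], by rwa [show -(k : ℤ) - 1 + 2 = -k + 1 by ring]⟩
      exact (smul_eq_zero.mp (by simpa using h.symm)).resolve_left ht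
  funext n
  exact (key n).1

lemma ext (ht : t ≠ 0) {x y : ℤ → V} (hx : IsLinearRec3 r s t x) (hy : IsLinearRec3 r s t y)
    (h0 : x 0 = y 0) (h1 : x 1 = y 1) (h2 : x 2 = y 2) : x = y :=
  sub_eq_zero.mp <| (hx.sub hy).eq_zero ht (by simp [h0]) (by simp [h1]) (by simp [h2])

end IsLinearRec3

end LinearRecurrence

section MatrixFinThree

variable {K : Type*} [Field K]

lemma Matrix.det_zpow_s14 {n : Type*} [Fintype n] [DecidableEq n] (A : Matrix n n K) (k : ℤ) :
    (A ^ k).det = A.det ^ k := by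
  cases k with
  | ofNat k => simp [det_pow]
  | negSucc k => simp [zpow_negSucc, det_nonsing_inv, det_pow, Ring.inverse_eq_inv']

lemma Matrix.two_smul_pow_three_fin_three {R : Type*} [CommRing R]
    (A : Matrix (Fin 3) (Fin 3) R) :
    (2 : R) • A ^ 3 =
      (2 * A.trace) • A ^ 2 - (A.trace ^ 2 - (A ^ 2).trace) • A + (2 * A.det) • 1 := by
  ext i j
  fin_cases i <;> fin_cases j <;>
    simp [pow_succ, Matrix.mul_apply, Fin.sum_univ_three, Matrix.trace_fin_three,
      Matrix.det_fin_three] <;> ring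

lemma Matrix.two_smul_zpow_add_fin_three {A : Matrix (Fin 3) (Fin 3) K}
    (hA : IsUnit A.det) (n m : ℤ) :
    (2 : K) • A ^ (n + m) = (2 * (A ^ m).trace) • A ^ n
      - ((A ^ m).trace ^ 2 - (A ^ (2 * m)).trace) • A ^ (n - m)
      + (2 * A.det ^ m) • A ^ (n - 2 * m) := by
  have hpow (k : ℕ) : (A ^ m) ^ k = A ^ (k * m) := by
    rw [← zpow_natCast, ← Matrix.zpow_mul _ hA, mul_comm]
  have hshift (k : ℕ) (l : ℤ) (hl : k * m + (n - 2 * m) = l) :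
      (A ^ m) ^ k * A ^ (n - 2 * m) = A ^ l := by
    rw [hpow, ← zpow_add hA, hl]
  have h1 : A ^ m * A ^ (n - 2 * m) = A ^ (n - m) := by
    simpa using hshift 1 (n - m) (by push_cast; ring)
  have hCH := congrArg (· * A ^ (n - 2 * m)) (two_smul_pow_three_fin_three (A ^ m))
  simp only [smul_mul, sub_mul, add_mul, one_mul] at hCH
  rwa [hshift 3 (n + m) (by push_cast; ring), hshift 2 n (by push_cast; ring), h1, hpow,
    det_zpow_s14, Nat.cast_ofNat] at hCH

end MatrixFinThree

section Companion

variable {K : Type*} [Field K]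

def companionMatrix3 (r s t : K) : Matrix (Fin 3) (Fin 3) K := !![r, s, t; 1, 0, 0; 0, 1, 0]

variable {r s t : K}

lemma det_companionMatrix3 : (companionMatrix3 r s t).det = t := by
  simp [companionMatrix3, det_fin_three]

lemma isUnit_det_companionMatrix3 (ht : t ≠ 0) : IsUnit (companionMatrix3 r s t).det := by
  rw [det_companionMatrix3]
  exact ht.isUnit

lemma companionMatrix3_pow_three :
    companionMatrix3 r s t ^ 3 =
      r • companionMatrix3 r s t ^ 2 + s • companionMatrix3 r s t + t • 1 := by
  ext i j
  fin_cases i <;> fin_cases j <;>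
    simp [companionMatrix3, pow_succ, Matrix.mul_apply, Fin.sum_univ_three] <;> ring

lemma isLinearRec3_companionMatrix3_zpow (ht : t ≠ 0) :
    IsLinearRec3 r s t fun n : ℤ ↦ companionMatrix3 r s t ^ n := by
  set C := companionMatrix3 r s t
  have hdet : IsUnit C.det := isUnit_det_companionMatrix3 ht
  intro n
  have hshift (k : ℕ) (m : ℤ) (hm : n - 3 + k = m) : C ^ (n - 3) * C ^ k = C ^ m := by
    rw [← hm, zpow_add hdet, zpow_natCast]
  calc C ^ n = C ^ (n - 3) * C ^ 3 := (hshift 3 n (by ring)).symm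
    _ = r • C ^ (n - 1) + s • C ^ (n - 2) + t • C ^ (n - 3) := by
      rw [companionMatrix3_pow_three, mul_add, mul_add, mul_smul_comm, mul_smul_comm,
        mul_smul_comm, mul_one, hshift 2 (n - 1) (by ring), ← zpow_add_one hdet,
        show n - 3 + 1 = n - 2 by ring]

namespace IsLinearRec3

lemma eq_companionMatrix3_zpow_mulVec (ht : t ≠ 0) {x : ℤ → K} (hx : IsLinearRec3 r s t x)
    (n : ℤ) : x n = (companionMatrix3 r s t ^ n *ᵥ ![x 2, x 1, x 0]) 2 := by
  let φ : Matrix (Fin 3) (Fin 3) K →ₗ[K] K :=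
    (LinearMap.proj 2).comp ((mulVecBilin K K).flip ![x 2, x 1, x 0])
  refine congrFun (hx.ext ht ((isLinearRec3_companionMatrix3_zpow ht).map φ) ?_ ?_ ?_) n <;>
    simp [φ, companionMatrix3, zpow_ofNat, sq, mulVec, dotProduct, Fin.sum_univ_three]

lemma eq_trace_companionMatrix3_zpow (ht : t ≠ 0) {x : ℤ → K} (hx : IsLinearRec3 r s t x)
    (h0 : x 0 = 3) (h1 : x 1 = r) (h2 : x 2 = r ^ 2 + 2 * s) (n : ℤ) :
    x n = (companionMatrix3 r s t ^ n).trace := by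
  refine congrFun (hx.ext ht ((isLinearRec3_companionMatrix3_zpow ht).map
    (traceLinearMap (Fin 3) K K)) ?_ ?_ ?_) n
  · simp [h0]
  · simp [h1, companionMatrix3, trace_fin_three]
  · simp [h2, companionMatrix3, trace_fin_three, zpow_ofNat, sq]
    ring

lemma two_mul_add (ht : t ≠ 0) {x : ℤ → K} (hx : IsLinearRec3 r s t x) (n m : ℤ) :
    2 * x (n + m) = 2 * (companionMatrix3 r s t ^ m).trace * x n
      - ((companionMatrix3 r s t ^ m).trace ^ 2 - (companionMatrix3 r s t ^ (2 * m)).trace)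
        * x (n - m) + 2 * t ^ m * x (n - 2 * m) := by
  have h := congrArg (fun X ↦ (X *ᵥ ![x 2, x 1, x 0]) 2)
    (two_smul_zpow_add_fin_three (isUnit_det_companionMatrix3 (r := r) (s := s) ht) n m)
  simpa only [add_mulVec, sub_mulVec, smul_mulVec, Pi.add_apply, Pi.sub_apply, Pi.smul_apply,
    smul_eq_mul, det_companionMatrix3, ← hx.eq_companionMatrix3_zpow_mulVec ht] using h

end IsLinearRec3

end Companion

theorem stmt_14_general (r s t : ℂ) (ht : t ≠ 0)
    (w v : ℤ → ℂ)
    (hw : ∀ n : ℤ, w n = r * w (n-1) + s * w (n-2) + t * w (n-3))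
    (hv : ∀ n : ℤ, v n = r * v (n-1) + s * v (n-2) + t * v (n-3))
    (hv0 : v 0 = 3) (hv1 : v 1 = r) (hv2 : v 2 = r ^ 2 + 2 * s) :
    ∀ n m : ℤ, 2 * w (n + m) =
      2 * v m * w n - (v m ^ 2 - v (2 * m)) * w (n - m) + 2 * t ^ m * w (n - 2 * m) := by
  intro n m
  have hv_trace := IsLinearRec3.eq_trace_companionMatrix3_zpow ht hv hv0 hv1 hv2
  rw [hv_trace m, hv_trace (2 * m)]
  exact IsLinearRec3.two_mul_add ht hw n m

theorem stmt_14 (r s t a b c : ℂ) (ht : t ≠ 0)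
    (w v : ℤ → ℂ)
    (hw : ∀ n : ℤ, w n = r * w (n-1) + s * w (n-2) + t * w (n-3))
    (hw0 : w 0 = a) (hw1 : w 1 = b) (hw2 : w 2 = c)
    (hv : ∀ n : ℤ, v n = r * v (n-1) + s * v (n-2) + t * v (n-3))
    (hv0 : v 0 = 3) (hv1 : v 1 = r) (hv2 : v 2 = r ^ 2 + 2 * s) :
    ∀ n m : ℤ, 2 * w (n + m) =
      2 * v m * w n - (v m ^ 2 - v (2 * m)) * w (n - m) + 2 * t ^ m * w (n - 2 * m) :=
  stmt_14_general r s t ht w v hw hv hv0 hv1 hv2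
end

section
/- For every natural number k and all integers n, ∑_{j=0}^{k} ∑_{i=0}^{j} C(k,j) C(j,i) t^{k-j} s^{k+j-i} r^i w_{n - 3k + j + i} = s^k w_n. -/
/-!
Let `E` be the shift `w ↦ (n ↦ w (n + 1))` on sequences `ℤ → ℂ` and `p = t + X (s + r X)`.
The recurrence says that `X ^ 3 - p` kills `w` under `E`, hence so does its multiple
`X ^ (3k) - p ^ k`. Expanding `p ^ k` by the binomial theorem twice and reading the result
at `n - 3k` gives the identity, after pulling out `s ^ k`.
-/

open Finset Polynomial

theorem add_mul_add_mul_pow_eq_sum {R : Type*} [CommSemiring R] (r s t x : R) (k : ℕ) :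
    (t + x * (s + r * x)) ^ k
      = ∑ j ∈ range (k + 1), ∑ i ∈ range (j + 1),
          (k.choose j : R) * (j.choose i : R) * t ^ (k - j) * s ^ (j - i) * r ^ i * x ^ (j + i) := by
  rw [add_comm, add_pow]
  refine sum_congr rfl fun j _ => ?_
  rw [mul_pow, add_comm s, add_pow, mul_sum, sum_mul, sum_mul]
  refine sum_congr rfl fun i _ => ?_
  ring

namespace IntSeq

variable {R : Type*} [CommRing R]

noncomputable def shift : Module.End R (ℤ → R) := LinearMap.funLeft R R (· + 1)

@[simp]
theorem shift_apply (w : ℤ → R) (n : ℤ) : shift w n = w (n + 1) := rfl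

theorem shift_pow_apply (m : ℕ) (w : ℤ → R) (n : ℤ) : (shift ^ m) w n = w (n + m) := by
  induction m generalizing n with
  | zero => simp
  | succ m ih =>
    rw [pow_succ', Module.End.mul_apply, shift_apply, ih]
    push_cast
    ring_nf

theorem aeval_shift_apply_eq_zero_of_dvd {p q : R[X]} {w : ℤ → R}
    (hp : aeval shift p w = 0) (hpq : p ∣ q) : aeval shift q w = 0 := by
  obtain ⟨m, rfl⟩ := hpq
  rw [mul_comm, map_mul, Module.End.mul_apply, hp, map_zero]

theorem aeval_shift_apply_eq_zero_of_recurrence {r s t : R} {w : ℤ → R}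
    (hw : ∀ n : ℤ, w n = r * w (n - 1) + s * w (n - 2) + t * w (n - 3)) :
    aeval shift (X ^ 3 - (C t + X * (C s + C r * X))) w = 0 := by
  funext n
  simp only [aeval_sub, map_pow, aeval_X, map_add, aeval_C, map_mul, LinearMap.sub_apply,
    LinearMap.add_apply, Module.algebraMap_end_apply, Module.End.mul_apply, map_smul, Pi.sub_apply,
    shift_pow_apply, Nat.cast_ofNat, Pi.add_apply, Pi.smul_apply, smul_eq_mul, shift_apply,
    Pi.zero_apply]
  rw [hw (n + 3)]
  ring_nf

theorem sum_choose_mul_choose_eq_of_recurrence {r s t : R} {w : ℤ → R}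
    (hw : ∀ n : ℤ, w n = r * w (n - 1) + s * w (n - 2) + t * w (n - 3)) (k : ℕ) (m : ℤ) :
    ∑ j ∈ range (k + 1), ∑ i ∈ range (j + 1),
        (k.choose j : R) * (j.choose i : R) * t ^ (k - j) * s ^ (j - i) * r ^ i * w (m + j + i)
      = w (m + 3 * k) := by
  have h := congrFun (aeval_shift_apply_eq_zero_of_dvd
    (aeval_shift_apply_eq_zero_of_recurrence hw)
    (sub_dvd_pow_sub_pow (X ^ 3) (C t + X * (C s + C r * X)) k)) m
  rw [← pow_mul, add_mul_add_mul_pow_eq_sum] at h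
  simp only [← map_pow, aeval_sub, aeval_X_pow, map_sum, map_mul, map_natCast, aeval_C,
    LinearMap.sub_apply, LinearMap.coe_sum, Finset.sum_apply, Module.End.mul_apply,
    Module.algebraMap_end_apply, map_smul, Module.End.natCast_apply, nsmul_eq_mul, Pi.sub_apply,
    shift_pow_apply, Nat.cast_mul, Nat.cast_ofNat, Pi.smul_apply, Pi.mul_apply, Pi.natCast_apply,
    Nat.cast_add, smul_eq_mul, Pi.zero_apply, sub_eq_zero] at h
  rw [h]
  refine sum_congr rfl fun j _ => sum_congr rfl fun i _ => ?_
  rw [add_assoc]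
  ring

end IntSeq

theorem stmt_18_general (r s t : ℂ)
    (w : ℤ → ℂ)
    (hw : ∀ n : ℤ, w n = r * w (n-1) + s * w (n-2) + t * w (n-3)) :
    ∀ (k : ℕ) (n : ℤ),
      ∑ j ∈ Finset.range (k+1), ∑ i ∈ Finset.range (j+1),
        (Nat.choose k j : ℂ) * (Nat.choose j i : ℂ) * t ^ (k - j) * s ^ (k + j - i) * r ^ i
          * w (n - 3 * (k : ℤ) + (j : ℤ) + (i : ℤ))
      = s ^ k * w n := by
  intro k n
  have key := IntSeq.sum_choose_mul_choose_eq_of_recurrence hw k (n - 3 * k)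
  rw [sub_add_cancel] at key
  rw [← key, mul_sum]
  refine sum_congr rfl fun j _ => ?_
  rw [mul_sum]
  refine sum_congr rfl fun i hi => ?_
  rw [show k + j - i = k + (j - i) by have := mem_range.mp hi; omega, pow_add]
  ring

theorem stmt_18 (r s t a b c : ℂ) (ht : t ≠ 0)
    (w : ℤ → ℂ)
    (hw : ∀ n : ℤ, w n = r * w (n-1) + s * w (n-2) + t * w (n-3))
    (hw0 : w 0 = a) (hw1 : w 1 = b) (hw2 : w 2 = c) :
    ∀ (k : ℕ) (n : ℤ),
      ∑ j ∈ Finset.range (k+1), ∑ i ∈ Finset.range (j+1),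
        (Nat.choose k j : ℂ) * (Nat.choose j i : ℂ) * t ^ (k - j) * s ^ (k + j - i) * r ^ i
          * w (n - 3 * (k : ℤ) + (j : ℤ) + (i : ℤ))
      = s ^ k * w n :=
  stmt_18_general r s t w hw
end

section
/- For every natural number k and all integers n, ∑_{j=0}^{k} ∑_{i=0}^{j} (-1)^i C(k,j) C(j,i) s^{k-j} r^{j-i} w_{n + k + j + i} = (-t)^k w_n. -/
/-!
Let `E` be the shift `(E w) n = w (n + 1)`. The recurrence says exactly that
`E (s + r E - E²) w = -t w`, hence `(E (s + r E - E²))ᵏ w = (-t)ᵏ w`. Expanding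
`Eᵏ ((-E² + r E) + s)ᵏ` twice by the binomial theorem gives the double sum, whose `(j, i)` term
is a multiple of `E^(k + j + i)`. The expansion is carried out in `R[X]` and evaluated at `E`.
-/

open Polynomial Finset

section ShiftOperator

variable {R : Type*} [CommRing R]

variable (R) in
def shift : Module.End R (ℤ → R) := LinearMap.funLeft R R (· + 1)

lemma shift_pow_apply (m : ℕ) (w : ℤ → R) (n : ℤ) : (shift R ^ m) w n = w (n + m) := by
  induction m generalizing n with
  | zero => simp
  | succ m ih =>
    rw [pow_succ', Module.End.mul_apply]
    change (shift R ^ m) w (n + 1) = _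
    rw [ih]
    congr 1
    push_cast
    ring

lemma aeval_shift_C_mul_X_pow_apply (c : R) (m : ℕ) (w : ℤ → R) (n : ℤ) :
    aeval (shift R) (C c * X ^ m) w n = c * w (n + m) := by
  simp [Algebra.algebraMap_eq_smul_one, shift_pow_apply]

lemma Module.End.pow_apply_of_apply_eq_smul {M : Type*} [AddCommGroup M] [Module R M]
    {f : Module.End R M} {μ : R} {v : M} (hv : f v = μ • v) (k : ℕ) :
    (f ^ k) v = μ ^ k • v := by
  induction k with
  | zero => simp
  | succ k ih => rw [pow_succ', Module.End.mul_apply, ih, map_smul, hv, smul_smul, pow_succ]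

lemma X_mul_pow_eq_sum (r s : R) (k : ℕ) :
    (X * (C s + C r * X - X ^ 2)) ^ k =
      ∑ j ∈ range (k + 1), ∑ i ∈ range (j + 1),
        C ((-1) ^ i * (k.choose j : R) * (j.choose i : R) * s ^ (k - j) * r ^ (j - i))
          * X ^ (k + j + i) := by
  rw [mul_pow, show C s + C r * X - X ^ 2 = (-X ^ 2 + C r * X) + C s by ring, add_pow, mul_sum]
  refine sum_congr rfl fun j _ => ?_
  rw [add_pow, sum_mul, sum_mul, mul_sum]
  refine sum_congr rfl fun i hi => ?_
  have hij : i ≤ j := Nat.lt_succ_iff.mp (mem_range.mp hi)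
  rw [show k + j + i = k + (j - i) + 2 * i by omega, pow_add, pow_add, pow_mul, neg_pow]
  simp only [map_mul, map_pow, map_neg, map_one, map_natCast, mul_pow]
  ring

lemma aeval_shift_eq_smul_of_recurrence {r s t : R} {w : ℤ → R}
    (hw : ∀ n : ℤ, w n = r * w (n - 1) + s * w (n - 2) + t * w (n - 3)) :
    aeval (shift R) (X * (C s + C r * X - X ^ 2)) w = (-t) • w := by
  ext n
  rw [show X * (C s + C r * X - X ^ 2) = C s * X ^ 1 + C r * X ^ 2 + C (-1) * X ^ 3 by
    simp only [map_neg, map_one]; ring]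
  simp only [map_add, LinearMap.add_apply, Pi.add_apply, aeval_shift_C_mul_X_pow_apply,
    Pi.smul_apply, smul_eq_mul]
  have h := hw (n + 3)
  rw [show n + 3 - 1 = n + 2 by ring, show n + 3 - 2 = n + 1 by ring, add_sub_cancel_right] at h
  push_cast
  linear_combination -h

end ShiftOperator

theorem stmt_19_general (r s t : ℂ)
    (w : ℤ → ℂ)
    (hw : ∀ n : ℤ, w n = r * w (n-1) + s * w (n-2) + t * w (n-3)) :
    ∀ (k : ℕ) (n : ℤ),
      ∑ j ∈ Finset.range (k+1), ∑ i ∈ Finset.range (j+1),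
        (-1 : ℂ) ^ i * (Nat.choose k j : ℂ) * (Nat.choose j i : ℂ) * s ^ (k - j) * r ^ (j - i)
          * w (n + (k : ℤ) + (j : ℤ) + (i : ℤ))
      = (-t) ^ k * w n := by
  intro k n
  have h := congrFun
    (Module.End.pow_apply_of_apply_eq_smul (aeval_shift_eq_smul_of_recurrence hw) k) n
  rw [← map_pow, X_mul_pow_eq_sum] at h
  simp only [map_sum, LinearMap.coe_sum, Finset.sum_apply, aeval_shift_C_mul_X_pow_apply,
    Pi.smul_apply, smul_eq_mul, Nat.cast_add, add_assoc] at h ⊢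
  exact h

theorem stmt_19 (r s t a b c : ℂ) (ht : t ≠ 0)
    (w : ℤ → ℂ)
    (hw : ∀ n : ℤ, w n = r * w (n-1) + s * w (n-2) + t * w (n-3))
    (hw0 : w 0 = a) (hw1 : w 1 = b) (hw2 : w 2 = c) :
    ∀ (k : ℕ) (n : ℤ),
      ∑ j ∈ Finset.range (k+1), ∑ i ∈ Finset.range (j+1),
        (-1 : ℂ) ^ i * (Nat.choose k j : ℂ) * (Nat.choose j i : ℂ) * s ^ (k - j) * r ^ (j - i)
          * w (n + (k : ℤ) + (j : ℤ) + (i : ℤ))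
      = (-t) ^ k * w n :=
  stmt_19_general r s t w hw
end
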